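/- arXiv:1109.1075 — 3 statements merged into one kernel-verified Lean document; each statement's English description precedes it below -/
import Mathlib

section
/- For every u ∈ C²(ℝ²) with compact support and every v ∈ C¹(ℝ²) with compact support, one has the integration-by-parts identity ∫_ℍ (Au) v 𝔴 dx dy = a(u,v), where the Heston bilinear form is taken over O = ℍ. -/
open MeasureTheory Real Filter

noncomputable section

/-- The open upper half-plane ℍ ⊂ ℝ². -/
def UHP : Set (ℝ × ℝ) := {p : ℝ × ℝ | 0 < p.2}

/-- Partial derivative in the first (x) variable. -/
def pdX (u : ℝ × ℝ → ℝ) (p : ℝ × ℝ) : ℝ := fderiv ℝ u p (1, 0)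

/-- Partial derivative in the second (y) variable. -/
def pdY (u : ℝ × ℝ → ℝ) (p : ℝ × ℝ) : ℝ := fderiv ℝ u p (0, 1)

/-- The weight 𝔴(x,y) = y^(β−1) exp(−γ|x| − μ y). -/
def hw (β γ μ : ℝ) (p : ℝ × ℝ) : ℝ :=
  p.2 ^ (β - 1) * Real.exp (-γ * |p.1| - μ * p.2)

/-- The Heston operator A. -/
def hestonOp (σ ρ κ θ r q : ℝ) (u : ℝ × ℝ → ℝ) (p : ℝ × ℝ) : ℝ :=
  -(p.2 / 2) * (pdX (pdX u) p + 2 * ρ * σ * pdY (pdX u) p + σ ^ 2 * pdY (pdY u) p)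
    - (r - q - p.2 / 2) * pdX u p - κ * (θ - p.2) * pdY u p + r * u p

/-- The Heston bilinear form a(u,v) over a set O ⊆ ℍ (with β = 2κθ/σ², μ = 2κ/σ²,
a₁ = κρ/σ − 1/2, b₁ = r − q − κθρ/σ). -/
def hestonForm (σ ρ κ θ r q γ : ℝ) (O : Set (ℝ × ℝ)) (u v : ℝ × ℝ → ℝ) : ℝ :=
  1 / 2 * (∫ p in O,
      (pdX u p * pdX v p + ρ * σ * pdY u p * pdX v p + ρ * σ * pdX u p * pdY v p
          + σ ^ 2 * pdY u p * pdY v p) * p.2 * hw (2 * κ * θ / σ ^ 2) γ (2 * κ / σ ^ 2) p)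
    - γ / 2 * (∫ p in O,
      (pdX u p + ρ * σ * pdY u p) * v p * Real.sign p.1 * p.2
          * hw (2 * κ * θ / σ ^ 2) γ (2 * κ / σ ^ 2) p)
    - (∫ p in O,
      ((κ * ρ / σ - 1 / 2) * p.2 + (r - q - κ * θ * ρ / σ)) * pdX u p * v p
          * hw (2 * κ * θ / σ ^ 2) γ (2 * κ / σ ^ 2) p)
    + r * (∫ p in O, u p * v p * hw (2 * κ * θ / σ ^ 2) γ (2 * κ / σ ^ 2) p)

/-- The squared weighted Sobolev H¹(O,𝔴) norm:
‖u‖² = ∫_O ( y(u_x² + u_y²) + (1+y)u² ) 𝔴. -/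
def h1Sq (β γ μ : ℝ) (O : Set (ℝ × ℝ)) (u : ℝ × ℝ → ℝ) : ℝ :=
  ∫ p in O, (p.2 * ((pdX u p) ^ 2 + (pdY u p) ^ 2) + (1 + p.2) * (u p) ^ 2) * hw β γ μ p

/-!
With `β = 2κθ/σ²` and `μ = 2κ/σ²`, the Heston operator is in divergence form with respect to
the weight `𝔴`: pointwise on `ℍ`,

  `(Au) v 𝔴 = (integrand of a(u,v)) + ∂ₓ(F₁ 𝔴) + ∂_y(F₂ y 𝔴)`,

where `F₁ = -½ (u_x + ρσ u_y) y v` and `F₂ = -½ (ρσ u_x + σ² u_y) v`; this uses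
`∂ₓ𝔴 = -γ sign(x) 𝔴` for `x ≠ 0` and `∂_y(y 𝔴) = (β - μy) 𝔴`. Both divergence terms integrate to
zero over `ℍ` by Fubini and the fundamental theorem of calculus on each line: `x ↦ F₁ 𝔴` is
continuous with compact support and smooth off `x = 0`, while `y ↦ F₂ y 𝔴 = F₂ y^β e^{-γ|x|-μy}`
has compact support and vanishes at `y = 0` because `β > 0`. Every integrand carries a factor
`v`, `v_x` or `v_y`, hence has compact support, and is integrable on `ℍ` since `y^(β-1)` is
integrable near `0`.
-/

open Set

section FundamentalTheorem

variable {E : Type*} [NormedAddCommGroup E] [NormedSpace ℝ E] [CompleteSpace E]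
  {F F' : ℝ → E} {a : ℝ}

theorem integral_Ioi_of_hasDerivAt_of_hasCompactSupport (hcont : ContinuousWithinAt F (Ici a) a)
    (hderiv : ∀ x ∈ Ioi a, HasDerivAt F (F' x) x) (hint : IntegrableOn F' (Ioi a))
    (hcs : HasCompactSupport F) : ∫ x in Ioi a, F' x = -F a := by
  simpa using integral_Ioi_of_hasDerivAt_of_tendsto hcont hderiv hint
    (hcs.is_zero_at_infty.mono_left atTop_le_cocompact)

theorem integral_Iic_of_hasDerivAt_of_hasCompactSupport (hcont : ContinuousWithinAt F (Iic a) a)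
    (hderiv : ∀ x ∈ Iio a, HasDerivAt F (F' x) x) (hint : IntegrableOn F' (Iic a))
    (hcs : HasCompactSupport F) : ∫ x in Iic a, F' x = F a := by
  simpa using integral_Iic_of_hasDerivAt_of_tendsto hcont hderiv hint
    (hcs.is_zero_at_infty.mono_left atBot_le_cocompact)

theorem integral_eq_zero_of_hasDerivAt_of_ne (hcont : Continuous F) (hcs : HasCompactSupport F)
    (hderiv : ∀ x ≠ a, HasDerivAt F (F' x) x) (hint : Integrable F') : ∫ x, F' x = 0 := by
  rw [← intervalIntegral.integral_Iic_add_Ioi hint.integrableOn hint.integrableOn,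
    integral_Iic_of_hasDerivAt_of_hasCompactSupport hcont.continuousWithinAt
      (fun x hx => hderiv x hx.ne) hint.integrableOn hcs,
    integral_Ioi_of_hasDerivAt_of_hasCompactSupport hcont.continuousWithinAt
      (fun x hx => hderiv x hx.ne') hint.integrableOn hcs, add_neg_cancel]

theorem integral_prod_eq_zero_of_hasDerivAt_fst {Y : Type*} [MeasurableSpace Y]
    {ν : Measure Y} [SFinite ν] {Φ Φ' : ℝ × Y → E}
    (hcont : ∀ y, Continuous fun x => Φ (x, y)) (hcs : ∀ y, HasCompactSupport fun x => Φ (x, y))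
    (hderiv : ∀ x y, x ≠ 0 → HasDerivAt (fun t => Φ (t, y)) (Φ' (x, y)) x)
    (hint : Integrable Φ' (volume.prod ν)) : ∫ p, Φ' p ∂volume.prod ν = 0 := by
  rw [integral_prod_symm _ hint]
  refine integral_eq_zero_of_ae ?_
  filter_upwards [hint.prod_left_ae] with y hy
  exact integral_eq_zero_of_hasDerivAt_of_ne (hcont y) (hcs y) (fun x hx => hderiv x y hx) hy

theorem integral_prod_Ioi_eq_zero_of_hasDerivAt_snd {X : Type*} [MeasurableSpace X]
    {μ : Measure X} [SFinite μ] {Φ Φ' : X × ℝ → E}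
    (hcont : ∀ x, ContinuousWithinAt (fun y => Φ (x, y)) (Ici 0) 0) (hzero : ∀ x, Φ (x, 0) = 0)
    (hcs : ∀ x, HasCompactSupport fun y => Φ (x, y))
    (hderiv : ∀ x y, 0 < y → HasDerivAt (fun s => Φ (x, s)) (Φ' (x, y)) y)
    (hint : Integrable Φ' (μ.prod (volume.restrict (Ioi 0)))) :
    ∫ p, Φ' p ∂μ.prod (volume.restrict (Ioi 0)) = 0 := by
  rw [integral_prod _ hint]
  refine integral_eq_zero_of_ae ?_
  filter_upwards [hint.prod_right_ae] with x hx
  rw [integral_Ioi_of_hasDerivAt_of_hasCompactSupport (hcont x) (fun y hy => hderiv x y hy) hx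
    (hcs x), hzero x, neg_zero, Pi.zero_apply]

end FundamentalTheorem

section Slices

variable {X Y β : Type*} [TopologicalSpace X] [TopologicalSpace Y] [Zero β]

theorem HasCompactSupport.comp_prodMkLeft [T1Space Y] {f : X × Y → β} (hf : HasCompactSupport f)
    (y : Y) : HasCompactSupport fun x => f (x, y) := by
  refine hf.comp_isClosedEmbedding ⟨isEmbedding_prodMkLeft y, ?_⟩
  convert isClosed_univ.prod (isClosed_singleton (x := y))
  ext ⟨a, b⟩
  simp [eq_comm]

theorem HasCompactSupport.comp_prodMkRight [T1Space X] {f : X × Y → β} (hf : HasCompactSupport f)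
    (x : X) : HasCompactSupport fun y => f (x, y) := by
  refine hf.comp_isClosedEmbedding ⟨isEmbedding_prodMkRight x, ?_⟩
  convert (isClosed_singleton (x := x)).prod isClosed_univ
  ext ⟨a, b⟩
  simp [eq_comm]

end Slices

section PartialDerivatives

variable {f : ℝ × ℝ → ℝ}

theorem hasDerivAt_slice_pdX {x y : ℝ} (hf : DifferentiableAt ℝ f (x, y)) :
    HasDerivAt (fun t => f (t, y)) (pdX f (x, y)) x :=
  hf.hasFDerivAt.comp_hasDerivAt x ((hasDerivAt_id x).prodMk (hasDerivAt_const x y))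

theorem hasDerivAt_slice_pdY {x y : ℝ} (hf : DifferentiableAt ℝ f (x, y)) :
    HasDerivAt (fun s => f (x, s)) (pdY f (x, y)) y :=
  hf.hasFDerivAt.comp_hasDerivAt y ((hasDerivAt_const y x).prodMk (hasDerivAt_id y))

theorem contDiff_pdX {n : ℕ} (hf : ContDiff ℝ (n + 1) f) : ContDiff ℝ n (pdX f) :=
  (hf.fderiv_right le_rfl).clm_apply contDiff_const

theorem contDiff_pdY {n : ℕ} (hf : ContDiff ℝ (n + 1) f) : ContDiff ℝ n (pdY f) :=
  (hf.fderiv_right le_rfl).clm_apply contDiff_const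

theorem pdX_pdY (hf : ContDiff ℝ 2 f) (p : ℝ × ℝ) : pdX (pdY f) p = pdY (pdX f) p := by
  have hd : DifferentiableAt ℝ (fderiv ℝ f) p :=
    (hf.fderiv_right (m := 1) le_rfl).differentiable one_ne_zero p
  have hcomm (v w : ℝ × ℝ) :
      fderiv ℝ (fun q => fderiv ℝ f q v) p w = fderiv ℝ (fderiv ℝ f) p w v := by
    rw [fderiv_clm_apply hd (differentiableAt_const _)]
    simp
  change fderiv ℝ (fun q => fderiv ℝ f q (0, 1)) p (1, 0)
    = fderiv ℝ (fun q => fderiv ℝ f q (1, 0)) p (0, 1)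
  rw [hcomm, hcomm]
  exact (hf.contDiffAt.isSymmSndFDerivAt (by simp)) _ _

end PartialDerivatives

theorem Real.abs_sign_le_one (x : ℝ) : |Real.sign x| ≤ 1 := by
  rcases Real.sign_apply_eq x with h | h | h <;> simp [h]

theorem Real.measurable_sign : Measurable Real.sign :=
  measurable_const.ite measurableSet_Iio (measurable_const.ite measurableSet_Ioi measurable_const)

theorem Real.sign_eq_signType_sign (x : ℝ) : Real.sign x = (SignType.sign x : ℝ) := by
  rcases lt_trichotomy x 0 with h | rfl | h
  · simp [Real.sign_of_neg h, h]
  · simp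
  · simp [Real.sign_of_pos h, h]

section HalfPlane

theorem measurableSet_UHP : MeasurableSet UHP :=
  measurableSet_lt measurable_const measurable_snd

theorem volume_restrict_UHP :
    (volume : Measure (ℝ × ℝ)).restrict UHP = volume.prod (volume.restrict (Ioi 0)) := by
  have hUHP : UHP = univ ×ˢ Ioi 0 := by
    ext p
    simp [UHP]
  rw [hUHP, Measure.volume_eq_prod, ← Measure.prod_restrict, Measure.restrict_univ]

theorem integrableOn_UHP_mul_rpow_snd {c : ℝ × ℝ → ℝ} (hc : Continuous c)
    (hcs : HasCompactSupport c) {s : ℝ} (hs : -1 < s) :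
    IntegrableOn (fun p => c p * p.2 ^ s) UHP := by
  obtain ⟨R, hR, hcR⟩ := hcs.isBounded.subset_closedBall_lt 0 0
  obtain ⟨M, hM⟩ := hc.bounded_above_of_compact_support hcs
  set g : ℝ × ℝ → ℝ := fun p => (Icc (-R) R).indicator 1 p.1 * (Ioo 0 (R + 1)).indicator (· ^ s) p.2
  have hg : IntegrableOn g UHP := by
    rw [IntegrableOn, volume_restrict_UHP]
    refine Integrable.mul_prod ((integrable_indicator_iff measurableSet_Icc).2
      (integrableOn_const (by simp))) ?_
    rw [integrable_indicator_iff measurableSet_Ioo, IntegrableOn,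
      Measure.restrict_restrict measurableSet_Ioo, inter_eq_left.2 Ioo_subset_Ioi_self]
    exact (intervalIntegral.integrableOn_Ioo_rpow_iff (by linarith)).2 hs
  have hcg : IntegrableOn (fun p => c p * g p) UHP :=
    hg.bdd_mul hc.aestronglyMeasurable (ae_of_all _ hM)
  refine hcg.congr_fun (fun p hp => ?_) measurableSet_UHP
  by_cases hcp : c p = 0
  · simp [hcp]
  have hpR := hcR (subset_tsupport c hcp)
  rw [Metric.mem_closedBall, dist_zero_right, Prod.norm_def, max_le_iff, Real.norm_eq_abs,
    Real.norm_eq_abs, abs_le, abs_le] at hpR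
  have h1 : p.1 ∈ Icc (-R) R := hpR.1
  have h2 : p.2 ∈ Ioo 0 (R + 1) := ⟨hp, by linarith [hpR.2.2]⟩
  simp [g, h1, h2]

end HalfPlane

section Weight

variable {β γ μ : ℝ}

theorem integrableOn_UHP_mul_hw (hβ : 0 < β) {c : ℝ × ℝ → ℝ} (hc : Continuous c)
    (hcs : HasCompactSupport c) : IntegrableOn (fun p => c p * hw β γ μ p) UHP := by
  have h := integrableOn_UHP_mul_rpow_snd (c := fun p => c p * exp (-γ * |p.1| - μ * p.2))
    (by fun_prop) hcs.mul_right (by linarith : -1 < β - 1)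
  exact h.congr_fun (fun p _ => by simp only [hw]; ring) measurableSet_UHP

theorem integrableOn_UHP_sign_mul_hw (hβ : 0 < β) {c : ℝ × ℝ → ℝ} (hc : Continuous c)
    (hcs : HasCompactSupport c) :
    IntegrableOn (fun p => Real.sign p.1 * (c p * hw β γ μ p)) UHP :=
  (integrableOn_UHP_mul_hw hβ hc hcs).bdd_mul
    (Real.measurable_sign.comp measurable_fst).aestronglyMeasurable
    (ae_of_all _ fun p => Real.abs_sign_le_one p.1)

theorem hasDerivAt_mul_hw_fst {c : ℝ → ℝ} {c' x : ℝ} (y : ℝ) (hc : HasDerivAt c c' x)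
    (hx : x ≠ 0) :
    HasDerivAt (fun t => c t * hw β γ μ (t, y))
      ((c' - γ * Real.sign x * c x) * hw β γ μ (x, y)) x := by
  have habs := hasDerivAt_abs hx
  rw [← Real.sign_eq_signType_sign] at habs
  have hexp := (((habs.const_mul (-γ)).sub_const (μ * y)).exp).const_mul (y ^ (β - 1))
  exact (hc.mul hexp).congr_deriv (by simp only [hw]; ring)

theorem hasDerivAt_mul_rpow_mul_exp_snd {c : ℝ → ℝ} {c' y : ℝ} (x : ℝ) (hc : HasDerivAt c c' y)
    (hy : 0 < y) :
    HasDerivAt (fun s => c s * (s ^ β * exp (-γ * |x| - μ * s)))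
      ((c' * y + c y * (β - μ * y)) * hw β γ μ (x, y)) y := by
  have hrpow := Real.hasDerivAt_rpow_const (p := β) (Or.inl hy.ne')
  have hexp := (((hasDerivAt_id y).const_mul μ).const_sub (-γ * |x|)).exp
  have hy' : y ^ β = y ^ (β - 1) * y := by
    rw [← Real.rpow_add_one hy.ne', sub_add_cancel]
  refine (hc.fun_mul (hrpow.fun_mul hexp)).congr_deriv ?_
  simp only [hw, hy', id]
  ring

theorem integrableOn_UHP_divX (hβ : 0 < β) {c : ℝ × ℝ → ℝ} (hc : ContDiff ℝ 1 c)
    (hcs : HasCompactSupport c) :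
    IntegrableOn (fun p => (pdX c p - γ * Real.sign p.1 * c p) * hw β γ μ p) UHP := by
  have h := (integrableOn_UHP_mul_hw (γ := γ) (μ := μ) hβ (contDiff_pdX (n := 0) hc).continuous
    (hcs.fderiv_apply ℝ _)).sub
    ((integrableOn_UHP_sign_mul_hw (γ := γ) (μ := μ) hβ hc.continuous hcs).const_mul γ)
  exact h.congr_fun (fun p _ => by simp only [Pi.sub_apply]; ring) measurableSet_UHP

theorem integral_UHP_divX_eq_zero (hβ : 0 < β) {c : ℝ × ℝ → ℝ} (hc : ContDiff ℝ 1 c)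
    (hcs : HasCompactSupport c) :
    ∫ p in UHP, (pdX c p - γ * Real.sign p.1 * c p) * hw β γ μ p = 0 := by
  have hint := integrableOn_UHP_divX (γ := γ) (μ := μ) hβ hc hcs
  rw [IntegrableOn, volume_restrict_UHP] at hint
  rw [volume_restrict_UHP]
  refine integral_prod_eq_zero_of_hasDerivAt_fst (Φ := fun p => c p * hw β γ μ p)
    (fun y => ?_) (fun y => (hcs.comp_prodMkLeft y).mul_right)
    (fun x y hx => hasDerivAt_mul_hw_fst y
      (hasDerivAt_slice_pdX (hc.differentiable one_ne_zero _)) hx) hint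
  have := hc.continuous
  simp only [hw]
  fun_prop

theorem integrableOn_UHP_divY (hβ : 0 < β) {c : ℝ × ℝ → ℝ} (hc : ContDiff ℝ 1 c)
    (hcs : HasCompactSupport c) :
    IntegrableOn (fun p => (pdY c p * p.2 + c p * (β - μ * p.2)) * hw β γ μ p) UHP := by
  have := hc.continuous
  have := (contDiff_pdY (n := 0) hc).continuous
  have h := (integrableOn_UHP_mul_hw (γ := γ) (μ := μ) (c := fun p => pdY c p * p.2) hβ
    (by fun_prop) (hcs.fderiv_apply ℝ _).mul_right).add
    (integrableOn_UHP_mul_hw (γ := γ) (μ := μ) (c := fun p => c p * (β - μ * p.2)) hβ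
      (by fun_prop) hcs.mul_right)
  exact h.congr_fun (fun p _ => by simp only [Pi.add_apply]; ring) measurableSet_UHP

theorem integral_UHP_divY_eq_zero (hβ : 0 < β) {c : ℝ × ℝ → ℝ} (hc : ContDiff ℝ 1 c)
    (hcs : HasCompactSupport c) :
    ∫ p in UHP, (pdY c p * p.2 + c p * (β - μ * p.2)) * hw β γ μ p = 0 := by
  have hint := integrableOn_UHP_divY (γ := γ) (μ := μ) hβ hc hcs
  rw [IntegrableOn, volume_restrict_UHP] at hint
  rw [volume_restrict_UHP]
  refine integral_prod_Ioi_eq_zero_of_hasDerivAt_snd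
    (Φ := fun p => c p * (p.2 ^ β * exp (-γ * |p.1| - μ * p.2))) (fun x => ?_)
    (fun x => by simp [Real.zero_rpow hβ.ne']) (fun x => (hcs.comp_prodMkRight x).mul_right)
    (fun x y hy => hasDerivAt_mul_rpow_mul_exp_snd x
      (hasDerivAt_slice_pdY (hc.differentiable one_ne_zero _)) hy) hint
  have := hc.continuous
  have := Real.continuous_rpow_const hβ.le
  exact Continuous.continuousWithinAt (by fun_prop)

end Weight

theorem HasCompactSupport.of_eq_zero_of_pdX_pdY {v f : ℝ × ℝ → ℝ} (hv : HasCompactSupport v)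
    (hf : ∀ p, v p = 0 → pdX v p = 0 → pdY v p = 0 → f p = 0) : HasCompactSupport f :=
  hv.mono' <| Function.support_subset_iff'.2 fun p hp => hf p
    (image_eq_zero_of_notMem_tsupport hp) (by simp [pdX, fderiv_of_notMem_tsupport ℝ hp])
    (by simp [pdY, fderiv_of_notMem_tsupport ℝ hp])

section Heston

variable {σ ρ κ θ r q γ : ℝ} {u v : ℝ × ℝ → ℝ}

def hestonFluxX (σ ρ : ℝ) (u v : ℝ × ℝ → ℝ) (p : ℝ × ℝ) : ℝ :=
  -(1 / 2) * (pdX u p + ρ * σ * pdY u p) * p.2 * v p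

def hestonFluxY (σ ρ : ℝ) (u v : ℝ × ℝ → ℝ) (p : ℝ × ℝ) : ℝ :=
  -(1 / 2) * (ρ * σ * pdX u p + σ ^ 2 * pdY u p) * v p

def hestonFormDensity (σ ρ κ θ r q γ : ℝ) (u v : ℝ × ℝ → ℝ) (p : ℝ × ℝ) : ℝ :=
  1 / 2 * ((pdX u p * pdX v p + ρ * σ * pdY u p * pdX v p + ρ * σ * pdX u p * pdY v p
          + σ ^ 2 * pdY u p * pdY v p) * p.2 * hw (2 * κ * θ / σ ^ 2) γ (2 * κ / σ ^ 2) p)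
    - γ / 2 * ((pdX u p + ρ * σ * pdY u p) * v p * Real.sign p.1 * p.2
          * hw (2 * κ * θ / σ ^ 2) γ (2 * κ / σ ^ 2) p)
    - ((κ * ρ / σ - 1 / 2) * p.2 + (r - q - κ * θ * ρ / σ)) * pdX u p * v p
          * hw (2 * κ * θ / σ ^ 2) γ (2 * κ / σ ^ 2) p
    + r * (u p * v p * hw (2 * κ * θ / σ ^ 2) γ (2 * κ / σ ^ 2) p)

theorem contDiff_hestonFluxX (hu : ContDiff ℝ 2 u) (hv : ContDiff ℝ 1 v) :
    ContDiff ℝ 1 (hestonFluxX σ ρ u v) := by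
  have := contDiff_pdX (n := 1) hu
  have := contDiff_pdY (n := 1) hu
  unfold hestonFluxX
  fun_prop

theorem contDiff_hestonFluxY (hu : ContDiff ℝ 2 u) (hv : ContDiff ℝ 1 v) :
    ContDiff ℝ 1 (hestonFluxY σ ρ u v) := by
  have := contDiff_pdX (n := 1) hu
  have := contDiff_pdY (n := 1) hu
  unfold hestonFluxY
  fun_prop

theorem pdX_hestonFluxX (hu : ContDiff ℝ 2 u) (hv : ContDiff ℝ 1 v) (p : ℝ × ℝ) :
    pdX (hestonFluxX σ ρ u v) p
      = -(1 / 2) * (pdX (pdX u) p + ρ * σ * pdY (pdX u) p) * p.2 * v p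
        - 1 / 2 * (pdX u p + ρ * σ * pdY u p) * p.2 * pdX v p := by
  obtain ⟨x, y⟩ := p
  have hslice {f : ℝ × ℝ → ℝ} (hf : ContDiff ℝ 1 f) :=
    hasDerivAt_slice_pdX (y := y) (hf.differentiable one_ne_zero (x, y))
  have huy := hslice (contDiff_pdY (n := 1) hu)
  rw [pdX_pdY hu] at huy
  refine (hslice (contDiff_hestonFluxX hu hv)).unique ?_
  exact (((((hslice (contDiff_pdX (n := 1) hu)).fun_add (huy.const_mul (ρ * σ))).const_mul
    (-(1 / 2))).mul_const y).fun_mul (hslice hv)).congr_deriv (by ring)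

theorem pdY_hestonFluxY (hu : ContDiff ℝ 2 u) (hv : ContDiff ℝ 1 v) (p : ℝ × ℝ) :
    pdY (hestonFluxY σ ρ u v) p
      = -(1 / 2) * (ρ * σ * pdY (pdX u) p + σ ^ 2 * pdY (pdY u) p) * v p
        - 1 / 2 * (ρ * σ * pdX u p + σ ^ 2 * pdY u p) * pdY v p := by
  obtain ⟨x, y⟩ := p
  have hslice {f : ℝ × ℝ → ℝ} (hf : ContDiff ℝ 1 f) :=
    hasDerivAt_slice_pdY (x := x) (hf.differentiable one_ne_zero (x, y))
  refine (hslice (contDiff_hestonFluxY hu hv)).unique ?_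
  exact (((((hslice (contDiff_pdX (n := 1) hu)).const_mul (ρ * σ)).fun_add
    ((hslice (contDiff_pdY (n := 1) hu)).const_mul (σ ^ 2))).const_mul (-(1 / 2))).fun_mul
    (hslice hv)).congr_deriv (by ring)

theorem hestonOp_mul_mul_hw_eq (hσ : σ ≠ 0) (hu : ContDiff ℝ 2 u) (hv : ContDiff ℝ 1 v)
    (p : ℝ × ℝ) :
    hestonOp σ ρ κ θ r q u p * v p * hw (2 * κ * θ / σ ^ 2) γ (2 * κ / σ ^ 2) p
      = hestonFormDensity σ ρ κ θ r q γ u v p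
        + (pdX (hestonFluxX σ ρ u v) p - γ * Real.sign p.1 * hestonFluxX σ ρ u v p)
          * hw (2 * κ * θ / σ ^ 2) γ (2 * κ / σ ^ 2) p
        + (pdY (hestonFluxY σ ρ u v) p * p.2
            + hestonFluxY σ ρ u v p * (2 * κ * θ / σ ^ 2 - 2 * κ / σ ^ 2 * p.2))
          * hw (2 * κ * θ / σ ^ 2) γ (2 * κ / σ ^ 2) p := by
  rw [pdX_hestonFluxX hu hv, pdY_hestonFluxY hu hv]
  simp only [hestonOp, hestonFormDensity, hestonFluxX, hestonFluxY]
  field_simp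
  ring

theorem integrableOn_UHP_hestonFormDensity (hβ : 0 < 2 * κ * θ / σ ^ 2) (hu : ContDiff ℝ 2 u)
    (hv : ContDiff ℝ 1 v) (hvcs : HasCompactSupport v) :
    IntegrableOn (hestonFormDensity σ ρ κ θ r q γ u v) UHP := by
  have := hu.continuous
  have := (contDiff_pdX (n := 1) hu).continuous
  have := (contDiff_pdY (n := 1) hu).continuous
  have := hv.continuous
  have := (contDiff_pdX (n := 0) hv).continuous
  have := (contDiff_pdY (n := 0) hv).continuous
  have h := (integrableOn_UHP_mul_hw (γ := γ) (μ := 2 * κ / σ ^ 2) hβ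
    (c := fun p => 1 / 2 * ((pdX u p * pdX v p + ρ * σ * pdY u p * pdX v p
      + ρ * σ * pdX u p * pdY v p + σ ^ 2 * pdY u p * pdY v p) * p.2)
      - ((κ * ρ / σ - 1 / 2) * p.2 + (r - q - κ * θ * ρ / σ)) * pdX u p * v p + r * (u p * v p))
    (by fun_prop) (hvcs.of_eq_zero_of_pdX_pdY fun p h₀ hx hy => by simp [h₀, hx, hy])).sub
    (integrableOn_UHP_sign_mul_hw (γ := γ) (μ := 2 * κ / σ ^ 2) hβ
      (c := fun p => γ / 2 * ((pdX u p + ρ * σ * pdY u p) * v p * p.2)) (by fun_prop)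
      (hvcs.of_eq_zero_of_pdX_pdY fun p h₀ _ _ => by simp [h₀]))
  exact h.congr_fun (fun p _ => by simp only [Pi.sub_apply, hestonFormDensity]; ring)
    measurableSet_UHP

theorem hestonForm_UHP_eq_integral (hβ : 0 < 2 * κ * θ / σ ^ 2) (hu : ContDiff ℝ 2 u)
    (hv : ContDiff ℝ 1 v) (hvcs : HasCompactSupport v) :
    hestonForm σ ρ κ θ r q γ UHP u v = ∫ p in UHP, hestonFormDensity σ ρ κ θ r q γ u v p := by
  have := hu.continuous
  have := (contDiff_pdX (n := 1) hu).continuous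
  have := (contDiff_pdY (n := 1) hu).continuous
  have := hv.continuous
  have := (contDiff_pdX (n := 0) hv).continuous
  have := (contDiff_pdY (n := 0) hv).continuous
  have h₁ := integrableOn_UHP_mul_hw (γ := γ) (μ := 2 * κ / σ ^ 2) hβ
    (c := fun p => (pdX u p * pdX v p + ρ * σ * pdY u p * pdX v p
      + ρ * σ * pdX u p * pdY v p + σ ^ 2 * pdY u p * pdY v p) * p.2)
    (by fun_prop) (hvcs.of_eq_zero_of_pdX_pdY fun p _ hx hy => by simp [hx, hy])
  have h₂ := (integrableOn_UHP_sign_mul_hw (γ := γ) (μ := 2 * κ / σ ^ 2) hβ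
    (c := fun p => (pdX u p + ρ * σ * pdY u p) * v p * p.2) (by fun_prop)
    (hvcs.of_eq_zero_of_pdX_pdY fun p h₀ _ _ => by simp [h₀])).congr_fun
    (g := fun p => (pdX u p + ρ * σ * pdY u p) * v p * Real.sign p.1 * p.2
      * hw (2 * κ * θ / σ ^ 2) γ (2 * κ / σ ^ 2) p) (fun p _ => by ring) measurableSet_UHP
  have h₃ := integrableOn_UHP_mul_hw (γ := γ) (μ := 2 * κ / σ ^ 2) hβ
    (c := fun p => ((κ * ρ / σ - 1 / 2) * p.2 + (r - q - κ * θ * ρ / σ)) * pdX u p * v p)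
    (by fun_prop) hvcs.mul_left
  have h₄ := integrableOn_UHP_mul_hw (γ := γ) (μ := 2 * κ / σ ^ 2) hβ (c := fun p => u p * v p)
    (by fun_prop) hvcs.mul_left
  unfold hestonForm hestonFormDensity
  rw [integral_add ?_ (h₄.const_mul _), integral_sub ?_ h₃,
    integral_sub (h₁.const_mul _) (h₂.const_mul _), integral_const_mul, integral_const_mul,
    integral_const_mul]
  · exact (h₁.const_mul _).sub (h₂.const_mul _)
  · exact ((h₁.const_mul _).sub (h₂.const_mul _)).sub h₃

end Heston

theorem stmt4_general (σ ρ κ θ r q : ℝ) (hσ : σ ≠ 0) (hκ : 0 < κ) (hθ : 0 < θ) (γ : ℝ)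
    (u v : ℝ × ℝ → ℝ) (hu : ContDiff ℝ 2 u) (hv : ContDiff ℝ 1 v) (hvcs : HasCompactSupport v) :
    ∫ p in UHP, hestonOp σ ρ κ θ r q u p * v p
        * hw (2 * κ * θ / σ ^ 2) γ (2 * κ / σ ^ 2) p
      = hestonForm σ ρ κ θ r q γ UHP u v := by
  have hβ : 0 < 2 * κ * θ / σ ^ 2 := by positivity
  have hX := contDiff_hestonFluxX (σ := σ) (ρ := ρ) hu hv
  have hY := contDiff_hestonFluxY (σ := σ) (ρ := ρ) hu hv
  have hXcs : HasCompactSupport (hestonFluxX σ ρ u v) := hvcs.mul_left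
  have hYcs : HasCompactSupport (hestonFluxY σ ρ u v) := hvcs.mul_left
  have hD := integrableOn_UHP_hestonFormDensity (ρ := ρ) (r := r) (q := q) (γ := γ) hβ hu hv hvcs
  have hdivX := integrableOn_UHP_divX (γ := γ) (μ := 2 * κ / σ ^ 2) hβ hX hXcs
  rw [setIntegral_congr_fun measurableSet_UHP fun p _ => hestonOp_mul_mul_hw_eq hσ hu hv p,
    integral_add ?_ (integrableOn_UHP_divY hβ hY hYcs), integral_add hD hdivX,
    integral_UHP_divX_eq_zero hβ hX hXcs, integral_UHP_divY_eq_zero hβ hY hYcs, add_zero,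
    add_zero, hestonForm_UHP_eq_integral hβ hu hv hvcs]
  exact hD.add hdivX

/-- integration by parts for the Heston operator over ℍ. -/
theorem stmt4 (σ ρ κ θ r q : ℝ) (hσ : σ ≠ 0) (hρ₁ : -1 < ρ) (hρ₂ : ρ < 1)
    (hκ : 0 < κ) (hθ : 0 < θ) (hr : 0 ≤ r) (hq : 0 ≤ q)
    (γ : ℝ) (hγ : 0 < γ)
    (u v : ℝ × ℝ → ℝ) (hu : ContDiff ℝ 2 u) (hucs : HasCompactSupport u)
    (hv : ContDiff ℝ 1 v) (hvcs : HasCompactSupport v) :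
    ∫ p in UHP, hestonOp σ ρ κ θ r q u p * v p
        * hw (2 * κ * θ / σ ^ 2) γ (2 * κ / σ ^ 2) p
      = hestonForm σ ρ κ θ r q γ UHP u v :=
  stmt4_general σ ρ κ θ r q hσ hκ hθ γ u v hu hv hvcs
end
end

section
/- Let β ≥ 1 and γ, μ > 0. For every u ∈ C^∞(ℝ²) with compact support and every ε > 0, there exists v ∈ C^∞(ℝ²) whose support is a compact subset of ℝ × (0,∞) such that ∫_ℍ ( y|D(u−v)|² + (1+y)(u−v)² ) 𝔴 dx dy < ε², where |Dw|² = w_x² + w_y². -/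
/-!
The approximant is `v = u · φ(y)` with a cutoff on a logarithmic scale,
`φ(y) = ψ(1 + log (N y) / N)` for the smooth transition `ψ`: it vanishes for `y ≤ e^{-N}/N`,
equals `1` for `y ≥ 1/N`, and `|φ'(y)| ≤ ‖ψ'‖∞ / (N y)`. The remainder `(1 - φ) u` lives in the
strip `0 < y ≤ 1/N`, where `β ≥ 1` makes the weight at most `e^{-γ|x|}`. There the terms without
`φ'` are bounded, so they contribute `O(1/N)`, while `y u² φ'² ≤ C / (N² y)` on
`[e^{-N}/N, 1/N]`, an interval on which `∫ dy / y = N`. Hence the weighted energy of the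
remainder is `O(1/N)`.
-/

open MeasureTheory Real Filter

noncomputable section

open Set

lemma integral_exp_neg_mul_abs {γ : ℝ} (hγ : 0 < γ) : ∫ x, exp (-γ * |x|) = 2 / γ := by
  rw [integral_comp_abs (f := fun x => exp (-γ * x)), integral_exp_mul_Ioi (by linarith) 0]
  field_simp
  simp

lemma integrable_exp_neg_mul_abs {γ : ℝ} (hγ : 0 < γ) : Integrable fun x : ℝ => exp (-γ * |x|) :=
  Integrable.of_integral_ne_zero (by rw [integral_exp_neg_mul_abs hγ]; positivity)

lemma deriv_smoothTransition_eq_zero {t : ℝ} (ht : t ∉ Icc 0 1) :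
    deriv smoothTransition t = 0 := by
  rcases not_and_or.1 ht with h | h <;> push Not at h
  · have : smoothTransition =ᶠ[nhds t] fun _ => 0 :=
      (eventually_lt_nhds h).mono fun s hs => smoothTransition.zero_of_nonpos hs.le
    rw [this.deriv_eq, deriv_const]
  · have : smoothTransition =ᶠ[nhds t] fun _ => 1 :=
      (eventually_gt_nhds h).mono fun s hs => smoothTransition.one_of_one_le hs.le
    rw [this.deriv_eq, deriv_const]

lemma exists_abs_deriv_smoothTransition_le : ∃ K, ∀ t, |deriv smoothTransition t| ≤ K :=
  (HasCompactSupport.intro isCompact_Icc fun _ ht => deriv_smoothTransition_eq_zero ht)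
    |>.exists_bound_of_continuous (smoothTransition.contDiff (n := 1).continuous_deriv le_rfl)

lemma HasCompactSupport.exists_bound_norm_and_norm_fderiv {E F : Type*}
    [NormedAddCommGroup E] [NormedSpace ℝ E] [NormedAddCommGroup F] [NormedSpace ℝ F]
    {u : E → F} (hu : ContDiff ℝ 1 u) (hucs : HasCompactSupport u) :
    ∃ M, ∀ p, ‖u p‖ ≤ M ∧ ‖fderiv ℝ u p‖ ≤ M := by
  obtain ⟨M₀, h₀⟩ := hucs.exists_bound_of_continuous hu.continuous
  obtain ⟨M₁, h₁⟩ :=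
    (hucs.fderiv (𝕜 := ℝ)).exists_bound_of_continuous (hu.continuous_fderiv one_ne_zero)
  exact ⟨max M₀ M₁, fun p => ⟨(h₀ p).trans (le_max_left _ _), (h₁ p).trans (le_max_right _ _)⟩⟩

lemma abs_pdX_le_norm_fderiv (u : ℝ × ℝ → ℝ) (p : ℝ × ℝ) : |pdX u p| ≤ ‖fderiv ℝ u p‖ := by
  simpa [pdX] using (fderiv ℝ u p).le_opNorm (1, 0)

lemma abs_pdY_le_norm_fderiv (u : ℝ × ℝ → ℝ) (p : ℝ × ℝ) : |pdY u p| ≤ ‖fderiv ℝ u p‖ := by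
  simpa [pdY] using (fderiv ℝ u p).le_opNorm (0, 1)

lemma hw_nonneg (β γ μ : ℝ) {p : ℝ × ℝ} (hp : 0 ≤ p.2) : 0 ≤ hw β γ μ p :=
  mul_nonneg (rpow_nonneg hp _) (exp_pos _).le

lemma hw_le_exp_neg_mul_abs {β γ μ : ℝ} (hβ : 1 ≤ β) (hμ : 0 ≤ μ) {p : ℝ × ℝ}
    (hp₀ : 0 ≤ p.2) (hp₁ : p.2 ≤ 1) : hw β γ μ p ≤ exp (-γ * |p.1|) :=
  calc hw β γ μ p ≤ 1 * exp (-γ * |p.1|) :=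
        mul_le_mul (rpow_le_one hp₀ hp₁ (by linarith))
          (exp_le_exp.2 (by nlinarith)) (exp_pos _).le zero_le_one
    _ = exp (-γ * |p.1|) := one_mul _

def energyDensity (β γ μ : ℝ) (w : ℝ × ℝ → ℝ) (p : ℝ × ℝ) : ℝ :=
  (p.2 * (pdX w p ^ 2 + pdY w p ^ 2) + (1 + p.2) * w p ^ 2) * hw β γ μ p

lemma energyDensity_nonneg (β γ μ : ℝ) (w : ℝ × ℝ → ℝ) {p : ℝ × ℝ} (hp : 0 ≤ p.2) :
    0 ≤ energyDensity β γ μ w p :=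
  mul_nonneg (by positivity) (hw_nonneg β γ μ hp)

section MulCompSnd

variable {β γ μ M : ℝ} {u : ℝ × ℝ → ℝ} {h : ℝ → ℝ} {h' : ℝ} {p : ℝ × ℝ}

lemma hasFDerivAt_mul_comp_snd (hu : DifferentiableAt ℝ u p) (hh : HasDerivAt h h' p.2) :
    HasFDerivAt (fun q => u q * h q.2)
      (u p • h' • ContinuousLinearMap.snd ℝ ℝ ℝ + h p.2 • fderiv ℝ u p) p :=
  hu.hasFDerivAt.mul (hh.comp_hasFDerivAt p hasFDerivAt_snd)

lemma pdX_mul_comp_snd (hu : DifferentiableAt ℝ u p) (hh : HasDerivAt h h' p.2) :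
    pdX (fun q => u q * h q.2) p = h p.2 * pdX u p := by
  simp [pdX, (hasFDerivAt_mul_comp_snd hu hh).fderiv]

lemma pdY_mul_comp_snd (hu : DifferentiableAt ℝ u p) (hh : HasDerivAt h h' p.2) :
    pdY (fun q => u q * h q.2) p = h p.2 * pdY u p + u p * h' := by
  simp [pdY, (hasFDerivAt_mul_comp_snd hu hh).fderiv]
  ring

lemma energyDensity_mul_comp_snd_le (hβ : 1 ≤ β) (hμ : 0 ≤ μ) (hp₀ : 0 < p.2) (hp₁ : p.2 ≤ 1)
    (hu : DifferentiableAt ℝ u p) (hh : HasDerivAt h h' p.2)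
    (hM : |u p| ≤ M) (hM' : ‖fderiv ℝ u p‖ ≤ M) :
    energyDensity β γ μ (fun q => u q * h q.2) p
      ≤ exp (-γ * |p.1|) * (5 * M ^ 2 * h p.2 ^ 2 + 2 * M ^ 2 * (p.2 * h' ^ 2)) := by
  have sq_le {a : ℝ} (ha : |a| ≤ M) : a ^ 2 ≤ M ^ 2 := sq_le_sq' (abs_le.1 ha).1 (abs_le.1 ha).2
  have hu₀ := sq_le hM
  have hux := sq_le ((abs_pdX_le_norm_fderiv u p).trans hM')
  have huy := sq_le ((abs_pdY_le_norm_fderiv u p).trans hM')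
  rw [energyDensity, pdX_mul_comp_snd hu hh, pdY_mul_comp_snd hu hh, mul_comm]
  refine mul_le_mul (hw_le_exp_neg_mul_abs hβ hμ hp₀.le hp₁) ?_
    (by positivity) (exp_pos _).le
  set y := p.2
  -- `(a + b)² ≤ 2a² + 2b²` for the `y`-derivative, then `y ≤ 1`
  nlinarith [mul_le_mul_of_nonneg_left hux (sq_nonneg (h y)),
    mul_le_mul_of_nonneg_left huy (sq_nonneg (h y)),
    mul_le_mul_of_nonneg_left hu₀ (sq_nonneg (h y)),
    mul_le_mul_of_nonneg_left hu₀ (sq_nonneg h'),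
    sq_nonneg (h y * pdY u p - u p * h'), mul_nonneg hp₀.le (sq_nonneg h'),
    mul_nonneg hp₀.le (sq_nonneg (h y * pdY u p - u p * h'))]

lemma energyDensity_mul_comp_snd_eq_zero (hu : DifferentiableAt ℝ u p) (hh : HasDerivAt h 0 p.2)
    (hh₀ : h p.2 = 0) : energyDensity β γ μ (fun q => u q * h q.2) p = 0 := by
  simp [energyDensity, pdX_mul_comp_snd hu hh, pdY_mul_comp_snd hu hh, hh₀]

end MulCompSnd

-- The `if` keeps `logCutoff` smooth across `y ≤ 0`, where `log` takes junk values.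
def logCutoff (r N y : ℝ) : ℝ :=
  if 0 < y then smoothTransition ((log y - log r) / N + 1) else 0

def logCutoffDeriv (r N y : ℝ) : ℝ :=
  deriv smoothTransition ((log y - log r) / N + 1) * (y⁻¹ / N)

section LogCutoff

variable {r N y : ℝ}

lemma logCutoff_nonneg : 0 ≤ logCutoff r N y := by
  unfold logCutoff; split_ifs
  exacts [smoothTransition.nonneg _, le_rfl]

lemma logCutoff_le_one : logCutoff r N y ≤ 1 := by
  unfold logCutoff; split_ifs
  exacts [smoothTransition.le_one _, zero_le_one]

lemma log_mul_exp_neg (hr : 0 < r) : log (r * exp (-N)) = log r - N := by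
  rw [log_mul hr.ne' (exp_pos _).ne', log_exp, sub_eq_add_neg]

lemma logCutoff_of_le (hr : 0 < r) (hN : 0 < N) (hy : y ≤ r * exp (-N)) :
    logCutoff r N y = 0 := by
  unfold logCutoff
  split_ifs with hy₀
  · refine smoothTransition.zero_of_nonpos ?_
    have := log_le_log hy₀ hy
    rw [log_mul_exp_neg hr] at this
    have : (log y - log r) / N ≤ -1 := by rw [div_le_iff₀ hN]; linarith
    linarith
  · rfl

lemma logCutoff_of_ge (hr : 0 < r) (hN : 0 ≤ N) (hy : r ≤ y) : logCutoff r N y = 1 := by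
  rw [logCutoff, if_pos (hr.trans_le hy)]
  refine smoothTransition.one_of_one_le ?_
  have := div_nonneg (sub_nonneg.2 (log_le_log hr hy)) hN
  linarith

lemma contDiff_logCutoff (hr : 0 < r) (hN : 0 < N) : ContDiff ℝ (⊤ : ℕ∞) (logCutoff r N) := by
  refine contDiff_iff_contDiffAt.2 fun y => ?_
  rcases lt_or_ge y (r * exp (-N)) with hy | hy
  · exact contDiffAt_const.congr_of_eventuallyEq
      ((eventually_lt_nhds hy).mono fun z hz => logCutoff_of_le hr hN hz.le)
  · have hy₀ : 0 < y := (by positivity : 0 < r * exp (-N)).trans_le hy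
    have : ContDiffAt ℝ (⊤ : ℕ∞) (fun z => smoothTransition ((log z - log r) / N + 1)) y :=
      smoothTransition.contDiffAt.comp y
        ((((contDiffAt_log.2 hy₀.ne').sub contDiffAt_const).div_const N).add contDiffAt_const)
    exact this.congr_of_eventuallyEq
      ((eventually_gt_nhds hy₀).mono fun z hz => if_pos hz)

lemma hasDerivAt_logCutoff (hy : 0 < y) :
    HasDerivAt (logCutoff r N) (logCutoffDeriv r N y) y := by
  have hψ : HasDerivAt smoothTransition (deriv smoothTransition ((log y - log r) / N + 1))
      ((log y - log r) / N + 1) :=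
    (smoothTransition.contDiff (n := 1).differentiable one_ne_zero _).hasDerivAt
  have := hψ.comp y ((((hasDerivAt_log hy.ne').sub_const (log r)).div_const N).add_const 1)
  exact this.congr_of_eventuallyEq ((eventually_gt_nhds hy).mono fun z hz => if_pos hz)

lemma logCutoffDeriv_of_notMem (hr : 0 < r) (hN : 0 < N) (hy : 0 < y)
    (hyI : y ∉ Icc (r * exp (-N)) r) : logCutoffDeriv r N y = 0 := by
  rw [logCutoffDeriv, deriv_smoothTransition_eq_zero, zero_mul]
  rintro ⟨h₀, h₁⟩
  refine hyI ⟨?_, ?_⟩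
  · rw [← log_le_log_iff (by positivity) hy, log_mul_exp_neg hr]
    have : -1 ≤ (log y - log r) / N := by linarith
    rw [le_div_iff₀ hN] at this
    linarith
  · rw [← log_le_log_iff hy hr]
    have : (log y - log r) / N ≤ 0 := by linarith
    rw [div_le_iff₀ hN] at this
    linarith

lemma abs_logCutoffDeriv_le {K : ℝ} (hK : ∀ t, |deriv smoothTransition t| ≤ K) (hN : 0 < N)
    (hy : 0 < y) : |logCutoffDeriv r N y| ≤ K * (y⁻¹ / N) := by
  rw [logCutoffDeriv, abs_mul, abs_of_pos (by positivity : 0 < y⁻¹ / N)]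
  exact mul_le_mul_of_nonneg_right (hK _) (by positivity)

lemma mul_logCutoffDeriv_sq_le {K : ℝ} (hK : ∀ t, |deriv smoothTransition t| ≤ K) (hr : 0 < r)
    (hN : 0 < N) (hy : 0 < y) :
    y * logCutoffDeriv r N y ^ 2
      ≤ K ^ 2 / N ^ 2 * (Icc (r * exp (-N)) r).indicator (fun z => z⁻¹) y := by
  by_cases hyI : y ∈ Icc (r * exp (-N)) r
  · rw [indicator_of_mem hyI]
    calc y * logCutoffDeriv r N y ^ 2 ≤ y * (K * (y⁻¹ / N)) ^ 2 := by
          rw [← sq_abs (logCutoffDeriv r N y)]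
          gcongr
          exact abs_logCutoffDeriv_le hK hN hy
      _ = K ^ 2 / N ^ 2 * y⁻¹ := by field_simp
  · simp [indicator_of_notMem hyI, logCutoffDeriv_of_notMem hr hN hy hyI]

end LogCutoff

section Integrals

variable {r N : ℝ}

lemma mul_exp_neg_le_self (hr : 0 < r) (hN : 0 ≤ N) : r * exp (-N) ≤ r :=
  mul_le_of_le_one_right hr.le (exp_le_one_iff.2 (by linarith))

lemma indicator_Icc_inv_nonneg (hr : 0 < r) (y : ℝ) :
    0 ≤ (Icc (r * exp (-N)) r).indicator (fun z => z⁻¹) y :=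
  indicator_nonneg (fun _ hz => inv_nonneg.2 ((by positivity : 0 ≤ r * exp (-N)).trans hz.1)) y

lemma integrable_indicator_Icc_inv (hr : 0 < r) :
    Integrable ((Icc (r * exp (-N)) r).indicator fun z => z⁻¹) :=
  (integrable_indicator_iff measurableSet_Icc).2 <| (continuousOn_inv₀.mono fun _ hz =>
    ((by positivity : 0 < r * exp (-N)).trans_le hz.1).ne').integrableOn_Icc

lemma integral_indicator_Icc_inv (hr : 0 < r) (hN : 0 ≤ N) :
    ∫ y, (Icc (r * exp (-N)) r).indicator (fun z => z⁻¹) y = N := by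
  rw [integral_indicator measurableSet_Icc, integral_Icc_eq_integral_Ioc,
    ← intervalIntegral.integral_of_le (mul_exp_neg_le_self hr hN),
    integral_inv_of_pos (by positivity) hr, div_mul_cancel_left₀ hr.ne', ← exp_neg, neg_neg,
    log_exp]

end Integrals

lemma setIntegral_UHP_le_integral_mul_integral {F : ℝ × ℝ → ℝ} {f g : ℝ → ℝ}
    (hf : Integrable f) (hg : Integrable g) (hf₀ : 0 ≤ f) (hg₀ : 0 ≤ g)
    (hF₀ : ∀ p ∈ UHP, 0 ≤ F p) (hF : ∀ p ∈ UHP, F p ≤ f p.1 * g p.2) :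
    ∫ p in UHP, F p ≤ (∫ x, f x) * ∫ y, g y := by
  have hUHP : MeasurableSet UHP := measurableSet_lt measurable_const measurable_snd
  have hfg : Integrable (fun p : ℝ × ℝ => f p.1 * g p.2) := by
    simpa only [← Measure.volume_eq_prod] using hf.mul_prod hg
  calc ∫ p in UHP, F p ≤ ∫ p in UHP, f p.1 * g p.2 :=
        integral_mono_of_nonneg ((ae_restrict_iff' hUHP).2 (ae_of_all _ hF₀)) hfg.restrict
          ((ae_restrict_iff' hUHP).2 (ae_of_all _ hF))
    _ ≤ ∫ p : ℝ × ℝ, f p.1 * g p.2 :=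
        setIntegral_le_integral hfg (ae_of_all _ fun p => mul_nonneg (hf₀ _) (hg₀ _))
    _ = (∫ x, f x) * ∫ y, g y := by rw [Measure.volume_eq_prod, integral_prod_mul]

lemma energyDensity_remainder_le {β γ μ M K r N : ℝ} {u : ℝ × ℝ → ℝ} (hβ : 1 ≤ β) (hμ : 0 ≤ μ)
    (hu : Differentiable ℝ u) (hM : ∀ p, ‖u p‖ ≤ M ∧ ‖fderiv ℝ u p‖ ≤ M)
    (hK : ∀ t, |deriv smoothTransition t| ≤ K) (hr : 0 < r) (hr₁ : r ≤ 1) (hN : 0 < N)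
    {p : ℝ × ℝ} (hp : 0 < p.2) :
    energyDensity β γ μ (fun q => u q * (1 - logCutoff r N q.2)) p ≤
      exp (-γ * |p.1|) * (5 * M ^ 2 * (Ioc 0 r).indicator 1 p.2
        + 2 * M ^ 2 * (K ^ 2 / N ^ 2 * (Icc (r * exp (-N)) r).indicator (fun z => z⁻¹) p.2)) := by
  have hder : HasDerivAt (fun y => 1 - logCutoff r N y) (-logCutoffDeriv r N p.2) p.2 :=
    (hasDerivAt_logCutoff hp).const_sub 1
  rcases le_or_gt p.2 r with hpr | hpr
  · refine (energyDensity_mul_comp_snd_le hβ hμ hp (hpr.trans hr₁) (hu p) hder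
      (by simpa using (hM p).1) (hM p).2).trans ?_
    rw [indicator_of_mem (show p.2 ∈ Ioc 0 r from ⟨hp, hpr⟩), Pi.one_apply, neg_sq]
    refine mul_le_mul_of_nonneg_left (add_le_add (mul_le_mul_of_nonneg_left ?_ (by positivity))
      (mul_le_mul_of_nonneg_left (mul_logCutoffDeriv_sq_le hK hr hN hp) (by positivity)))
      (exp_pos _).le
    nlinarith [logCutoff_nonneg (r := r) (N := N) (y := p.2),
      logCutoff_le_one (r := r) (N := N) (y := p.2)]
  · have hpI : p.2 ∉ Icc (r * exp (-N)) r := fun h => hpr.not_ge h.2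
    rw [logCutoffDeriv_of_notMem hr hN hp hpI, neg_zero] at hder
    rw [energyDensity_mul_comp_snd_eq_zero (hu p) hder
      (by rw [logCutoff_of_ge hr hN.le hpr.le, sub_self])]
    simp [indicator_of_notMem hpI, indicator_of_notMem fun h : p.2 ∈ Ioc 0 r => hpr.not_ge h.2]

lemma exists_integral_energyDensity_remainder_le {β γ μ : ℝ} (hβ : 1 ≤ β) (hγ : 0 < γ)
    (hμ : 0 ≤ μ) {u : ℝ × ℝ → ℝ} (hu : ContDiff ℝ 1 u) (hucs : HasCompactSupport u) :
    ∃ C, ∀ N, 1 ≤ N →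
      ∫ p in UHP, energyDensity β γ μ (fun q => u q * (1 - logCutoff N⁻¹ N q.2)) p ≤ C / N := by
  obtain ⟨M, hM⟩ := hucs.exists_bound_norm_and_norm_fderiv hu
  obtain ⟨K, hK⟩ := exists_abs_deriv_smoothTransition_le
  refine ⟨2 / γ * (5 * M ^ 2 + 2 * M ^ 2 * K ^ 2), fun N hN => ?_⟩
  have hN₀ : 0 < N := by linarith
  have hr : 0 < N⁻¹ := inv_pos.2 hN₀
  set g : ℝ → ℝ := fun y => 5 * M ^ 2 * (Ioc 0 N⁻¹).indicator 1 y
    + 2 * M ^ 2 * (K ^ 2 / N ^ 2 * (Icc (N⁻¹ * exp (-N)) N⁻¹).indicator (fun z => z⁻¹) y)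
  have hIoc : Integrable ((Ioc 0 N⁻¹).indicator (1 : ℝ → ℝ)) :=
    (integrable_indicator_iff measurableSet_Ioc).2 (integrableOn_const measure_Ioc_lt_top.ne)
  have hIcc := integrable_indicator_Icc_inv (N := N) hr
  have hg : Integrable g := (hIoc.const_mul _).add ((hIcc.const_mul _).const_mul _)
  have hg₀ : 0 ≤ g := fun y =>
    add_nonneg (mul_nonneg (by positivity) (indicator_nonneg (fun _ _ => zero_le_one) y))
      (mul_nonneg (by positivity) (mul_nonneg (by positivity) (indicator_Icc_inv_nonneg hr y)))
  have hg_integral : ∫ y, g y = (5 * M ^ 2 + 2 * M ^ 2 * K ^ 2) / N := by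
    rw [integral_add (hIoc.const_mul _) ((hIcc.const_mul _).const_mul _), integral_const_mul,
      integral_const_mul, integral_const_mul, integral_indicator_one measurableSet_Ioc,
      Real.volume_real_Ioc, integral_indicator_Icc_inv hr hN₀.le, max_eq_left (by linarith)]
    field_simp
    ring
  calc _ ≤ (∫ x, exp (-γ * |x|)) * ∫ y, g y :=
        setIntegral_UHP_le_integral_mul_integral (integrable_exp_neg_mul_abs hγ) hg
          (fun x => (exp_pos _).le) hg₀ (fun p hp => energyDensity_nonneg β γ μ _ (le_of_lt hp))
          fun p hp => energyDensity_remainder_le hβ hμ (hu.differentiable one_ne_zero) hM hK hr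
            (inv_le_one_of_one_le₀ hN) hN₀ hp
    _ = _ := by rw [integral_exp_neg_mul_abs hγ, hg_integral]; ring

lemma tsupport_mul_logCutoff_subset_UHP {r N : ℝ} (hr : 0 < r) (hN : 0 < N) (u : ℝ × ℝ → ℝ) :
    tsupport (fun q => u q * logCutoff r N q.2) ⊆ UHP := by
  have hsupp : Function.support (fun q => u q * logCutoff r N q.2) ⊆ {q | r * exp (-N) ≤ q.2} :=
    fun q hq => show r * exp (-N) ≤ q.2 from
      le_of_not_gt fun hlt => hq (by simp [logCutoff_of_le hr hN hlt.le])
  exact (closure_minimal hsupp (isClosed_le continuous_const continuous_snd)).trans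
    fun q hq => (by positivity : 0 < r * exp (-N)).trans_le hq

/-- density, in the weighted H¹ norm, of smooth functions compactly
supported away from the boundary, when β ≥ 1. -/
theorem stmt10 (β γ μ : ℝ) (hβ : 1 ≤ β) (hγ : 0 < γ) (hμ : 0 < μ)
    (u : ℝ × ℝ → ℝ) (hu : ContDiff ℝ (⊤ : ℕ∞) u) (hucs : HasCompactSupport u)
    (ε : ℝ) (hε : 0 < ε) :
    ∃ v : ℝ × ℝ → ℝ, ContDiff ℝ (⊤ : ℕ∞) v ∧ HasCompactSupport v ∧ tsupport v ⊆ UHP ∧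
      ∫ p in UHP,
          (p.2 * ((pdX (u - v) p) ^ 2 + (pdY (u - v) p) ^ 2)
            + (1 + p.2) * (u p - v p) ^ 2) * hw β γ μ p < ε ^ 2 := by
  obtain ⟨C, hC⟩ :=
    exists_integral_energyDensity_remainder_le hβ hγ hμ.le (hu.of_le (by simp)) hucs
  obtain ⟨N, hCN, hN⟩ : ∃ N, C / N < ε ^ 2 ∧ 1 ≤ N :=
    ((tendsto_const_nhds.div_atTop tendsto_id).eventually (gt_mem_nhds (by positivity))).and
      (eventually_ge_atTop 1) |>.exists
  have hN₀ : 0 < N := by linarith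
  refine ⟨fun q => u q * logCutoff N⁻¹ N q.2,
    hu.mul ((contDiff_logCutoff (inv_pos.2 hN₀) hN₀).comp contDiff_snd), hucs.mul_right,
    tsupport_mul_logCutoff_subset_UHP (inv_pos.2 hN₀) hN₀ u, ?_⟩
  have hrem : (u - fun q => u q * logCutoff N⁻¹ N q.2) = fun q => u q * (1 - logCutoff N⁻¹ N q.2) :=
    funext fun q => by simp only [Pi.sub_apply]; ring
  show ∫ p in UHP, energyDensity β γ μ (u - fun q => u q * logCutoff N⁻¹ N q.2) p < ε ^ 2
  rw [hrem]
  exact (hC N hN).trans_lt hCN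
end
end

section
/- Let 0 < β < 1 and γ, μ > 0. There exists a constant C > 0, depending only on β and μ, such that for every u ∈ C¹(ℝ²) with compact support satisfying u(x,0) = 0 for all x ∈ ℝ, and for every y ∈ (0,1]: ∫_ℝ u(x,y)² e^{−γ|x|} dx ≤ C y ∫₀^y ∫_ℝ |Du(x,z)|² z^{β−1} e^{−γ|x| − μz} dx dz, where |Du|² = u_x² + u_y². -/
open MeasureTheory Real Filter

noncomputable section

/-!
Since `u` vanishes on the boundary line, `u(x, y) = ∫₀^y ∂_y u(x, z) dz`, and Cauchy–Schwarz gives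
`u(x, y)² ≤ y ∫₀^y (∂_y u)²`. For `0 < z < y ≤ 1` the weight is harmless from below:
`z^(β-1) ≥ 1` because `β < 1`, and `e^(-μz) ≥ e^(-μ)`, so `(∂_y u)² ≤ e^μ |Du|² z^(β-1) e^(-μz)`.
Multiplying by `e^(-γ|x|)`, integrating in `x` and exchanging the integrals (Fubini applies since
`z^(β-1)` is integrable at `0` for `β > 0`) gives the estimate with `C = e^μ`.
-/

open Set

theorem sq_integral_le_measureReal_mul_integral_sq {α : Type*} [MeasurableSpace α]
    {μ : Measure α} [IsFiniteMeasure μ] {f : α → ℝ} (hf : Integrable f μ)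
    (hf2 : Integrable (fun a => f a ^ 2) μ) :
    (∫ a, f a ∂μ) ^ 2 ≤ μ.real univ * ∫ a, f a ^ 2 ∂μ := by
  rcases eq_zero_or_neZero μ with rfl | _
  · simp
  have hμ : 0 < μ.real univ := by
    simpa [measureReal_def, ENNReal.toReal_pos_iff, pos_iff_ne_zero] using NeZero.ne μ
  have hjensen := (even_two.convexOn_pow (𝕜 := ℝ)).map_average_le
    (continuous_pow 2).continuousOn isClosed_univ (ae_of_all _ fun _ => mem_univ _) hf hf2
  simp only [average_eq, smul_eq_mul] at hjensen
  rw [mul_pow, inv_pow, sq (μ.real univ)] at hjensen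
  have := mul_le_mul_of_nonneg_left hjensen (sq_nonneg (μ.real univ))
  field_simp at this
  linarith

theorem sq_le_mul_setIntegral_Ioo_deriv_sq {f f' : ℝ → ℝ} {y : ℝ} (hy : 0 ≤ y)
    (hf : ∀ t, HasDerivAt f (f' t) t) (hf' : Continuous f') (h0 : f 0 = 0) :
    f y ^ 2 ≤ y * ∫ z in Ioo 0 y, f' z ^ 2 := by
  have hftc : f y = ∫ z in Ioo 0 y, f' z := by
    rw [← integral_Ioc_eq_integral_Ioo, ← intervalIntegral.integral_of_le hy,
      intervalIntegral.integral_eq_sub_of_hasDerivAt (fun t _ => hf t)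
        (hf'.intervalIntegrable 0 y), h0, sub_zero]
  have hcs := sq_integral_le_measureReal_mul_integral_sq (μ := volume.restrict (Ioo 0 y))
    (hf'.integrableOn_Ioc.mono_set Ioo_subset_Ioc_self)
    ((hf'.pow 2).integrableOn_Ioc.mono_set Ioo_subset_Ioc_self)
  rwa [← hftc, measureReal_restrict_apply_univ, Real.volume_real_Ioo_of_le hy, sub_zero] at hcs

theorem one_le_exp_mul_rpow_mul_exp_neg {s μ z : ℝ} (hs : s ≤ 0) (hμ : 0 ≤ μ) (hz0 : 0 < z)
    (hz1 : z ≤ 1) : 1 ≤ exp μ * (z ^ s * exp (-μ * z)) := by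
  have hrpow : 1 ≤ z ^ s := Real.one_le_rpow_of_pos_of_le_one_of_nonpos hz0 hz1 hs
  have hexp : 1 ≤ exp μ * exp (-μ * z) := by
    rw [← exp_add]
    exact one_le_exp (by nlinarith)
  calc (1 : ℝ) ≤ exp μ * exp (-μ * z) := hexp
    _ ≤ exp μ * exp (-μ * z) * z ^ s := le_mul_of_one_le_right (by positivity) hrpow
    _ = exp μ * (z ^ s * exp (-μ * z)) := by ring

theorem HasCompactSupport.integrable_mul_rpow_snd {ψ : ℝ × ℝ → ℝ} (hcs : HasCompactSupport ψ)
    (hψ : Continuous ψ) {s : ℝ} (hs : -1 < s) (a : ℝ) :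
    Integrable (fun p => ψ p * p.2 ^ s)
      ((volume : Measure ℝ).prod (volume.restrict (Ioo 0 a))) := by
  obtain ⟨M, hM⟩ := hcs.exists_bound_of_continuous hψ
  have hM0 : 0 ≤ M := (norm_nonneg _).trans (hM 0)
  set K := Prod.fst '' tsupport ψ
  have hK : IsCompact K := hcs.isCompact.image continuous_fst
  have hbound : Integrable (K.indicator fun _ => M) volume :=
    (integrable_indicator_iff hK.measurableSet).2 (integrableOn_const hK.measure_lt_top.ne)
  have hrpow : IntegrableOn (fun z : ℝ => z ^ s) (Ioo 0 a) :=
    (intervalIntegral.intervalIntegrable_rpow' hs).1.mono_set Ioo_subset_Ioc_self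
  refine (hbound.mul_prod hrpow.norm).mono'
    (hψ.aestronglyMeasurable.mul (measurable_snd.pow_const s).aestronglyMeasurable)
    (ae_of_all _ fun p => ?_)
  rw [norm_mul]
  by_cases hp : ψ p = 0
  · simpa [hp] using mul_nonneg (indicator_nonneg (fun _ _ => hM0) _) (abs_nonneg _)
  rw [indicator_of_mem (mem_image_of_mem Prod.fst (subset_tsupport ψ hp))]
  gcongr
  exact hM p

def gradNormSq (u : ℝ × ℝ → ℝ) (p : ℝ × ℝ) : ℝ := pdX u p ^ 2 + pdY u p ^ 2

theorem ContDiff.continuous_pdX {u : ℝ × ℝ → ℝ} (hu : ContDiff ℝ 1 u) : Continuous (pdX u) :=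
  (hu.continuous_fderiv one_ne_zero).clm_apply continuous_const

theorem ContDiff.continuous_pdY {u : ℝ × ℝ → ℝ} (hu : ContDiff ℝ 1 u) : Continuous (pdY u) :=
  (hu.continuous_fderiv one_ne_zero).clm_apply continuous_const

theorem ContDiff.continuous_gradNormSq {u : ℝ × ℝ → ℝ} (hu : ContDiff ℝ 1 u) :
    Continuous (gradNormSq u) :=
  (hu.continuous_pdX.pow 2).add (hu.continuous_pdY.pow 2)

theorem HasCompactSupport.gradNormSq {u : ℝ × ℝ → ℝ} (hcs : HasCompactSupport u) :
    HasCompactSupport (gradNormSq u) :=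
  (hcs.fderiv ℝ).comp_left (g := fun L : ℝ × ℝ →L[ℝ] ℝ => L (1, 0) ^ 2 + L (0, 1) ^ 2) (by simp)

theorem Differentiable.hasDerivAt_pdY {u : ℝ × ℝ → ℝ} (hu : Differentiable ℝ u) (x z : ℝ) :
    HasDerivAt (fun t => u (x, t)) (pdY u (x, z)) z :=
  (hu (x, z)).hasFDerivAt.comp_hasDerivAt z ((hasDerivAt_const z x).prodMk (hasDerivAt_id z))

theorem sq_mul_exp_le_exp_mul_setIntegral_gradNormSq {u : ℝ × ℝ → ℝ} (hu : ContDiff ℝ 1 u)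
    {x β γ μ y : ℝ} (hb : u (x, 0) = 0) (hβ : β ≤ 1) (hμ : 0 ≤ μ) (hy0 : 0 < y) (hy1 : y ≤ 1)
    (hint : IntegrableOn
      (fun z => gradNormSq u (x, z) * z ^ (β - 1) * exp (-γ * |x| - μ * z)) (Ioo 0 y)) :
    u (x, y) ^ 2 * exp (-γ * |x|) ≤ exp μ * y *
      ∫ z in Ioo 0 y, gradNormSq u (x, z) * z ^ (β - 1) * exp (-γ * |x| - μ * z) := by
  have hpdY : Continuous fun z => pdY u (x, z) := hu.continuous_pdY.comp (by fun_prop)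
  have hsq := sq_le_mul_setIntegral_Ioo_deriv_sq hy0.le
    ((hu.differentiable one_ne_zero).hasDerivAt_pdY x) hpdY hb
  have hpointwise : ∀ z ∈ Ioo 0 y, pdY u (x, z) ^ 2 * exp (-γ * |x|) ≤
      exp μ * (gradNormSq u (x, z) * z ^ (β - 1) * exp (-γ * |x| - μ * z)) := by
    intro z hz
    have hweight := one_le_exp_mul_rpow_mul_exp_neg (sub_nonpos.2 hβ) hμ hz.1
      (hz.2.le.trans hy1)
    have hpdY_le : pdY u (x, z) ^ 2 ≤ gradNormSq u (x, z) :=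
      le_add_of_nonneg_left (sq_nonneg _)
    calc pdY u (x, z) ^ 2 * exp (-γ * |x|)
        ≤ gradNormSq u (x, z) * (exp μ * (z ^ (β - 1) * exp (-μ * z))) * exp (-γ * |x|) := by
          gcongr
          exact hpdY_le.trans (le_mul_of_one_le_right ((sq_nonneg _).trans hpdY_le) hweight)
      _ = exp μ * (gradNormSq u (x, z) * z ^ (β - 1) * exp (-γ * |x| - μ * z)) := by
          rw [show -γ * |x| - μ * z = -γ * |x| + -μ * z by ring, exp_add]
          ring
  have hmono : ∫ z in Ioo 0 y, pdY u (x, z) ^ 2 * exp (-γ * |x|) ≤ ∫ z in Ioo 0 y,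
      exp μ * (gradNormSq u (x, z) * z ^ (β - 1) * exp (-γ * |x| - μ * z)) :=
    setIntegral_mono_on
      (((hpdY.pow 2).integrableOn_Ioc.mono_set Ioo_subset_Ioc_self).mul_const _)
      (hint.const_mul _) measurableSet_Ioo hpointwise
  rw [integral_const_mul, integral_mul_const] at hmono
  calc u (x, y) ^ 2 * exp (-γ * |x|)
      ≤ y * (∫ z in Ioo 0 y, pdY u (x, z) ^ 2) * exp (-γ * |x|) := by gcongr
    _ ≤ y * (exp μ * ∫ z in Ioo 0 y,
          gradNormSq u (x, z) * z ^ (β - 1) * exp (-γ * |x| - μ * z)) := by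
        rw [mul_assoc]
        gcongr
    _ = _ := by ring

/-- estimate, near the degenerate boundary, for C¹ functions vanishing
on Γ₀, when 0 < β < 1; the constant C depends only on β and μ. -/
theorem stmt13 :
    ∀ β : ℝ, 0 < β → β < 1 → ∀ μ : ℝ, 0 < μ → ∃ C : ℝ, 0 < C ∧
      ∀ γ : ℝ, 0 < γ →
        ∀ u : ℝ × ℝ → ℝ, ContDiff ℝ 1 u → HasCompactSupport u →
          (∀ x : ℝ, u (x, 0) = 0) →
          ∀ y : ℝ, 0 < y → y ≤ 1 →
            (∫ x : ℝ, (u (x, y)) ^ 2 * Real.exp (-γ * |x|))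
              ≤ C * y * ∫ z in Set.Ioo (0 : ℝ) y, ∫ x : ℝ,
                  ((pdX u (x, z)) ^ 2 + (pdY u (x, z)) ^ 2) * z ^ (β - 1)
                    * Real.exp (-γ * |x| - μ * z) := by
  intro β hβ0 hβ1 μ hμ
  refine ⟨exp μ, exp_pos μ, fun γ _ u hu hcs hb y hy0 hy1 => ?_⟩
  set F : ℝ → ℝ → ℝ := fun x z => gradNormSq u (x, z) * z ^ (β - 1) * exp (-γ * |x| - μ * z)
  have hF : Integrable (Function.uncurry F)
      ((volume : Measure ℝ).prod (volume.restrict (Ioo 0 y))) := by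
    have hψ : Continuous fun p : ℝ × ℝ => gradNormSq u p * exp (-γ * |p.1| - μ * p.2) :=
      hu.continuous_gradNormSq.mul (by fun_prop)
    refine ((hcs.gradNormSq.mul_right).integrable_mul_rpow_snd hψ
      (by linarith : -1 < β - 1) y).congr (ae_of_all _ fun p => ?_)
    simp only [F, Function.uncurry, Pi.mul_apply]
    ring
  calc ∫ x, u (x, y) ^ 2 * exp (-γ * |x|)
      ≤ ∫ x, exp μ * y * ∫ z in Ioo 0 y, F x z :=
        integral_mono_of_nonneg (ae_of_all _ fun x => by positivity)
          (hF.integral_prod_left.const_mul _)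
          (hF.prod_right_ae.mono fun x hx =>
            sq_mul_exp_le_exp_mul_setIntegral_gradNormSq hu (hb x) hβ1.le hμ.le hy0 hy1 hx)
    _ = exp μ * y * ∫ z in Ioo 0 y, ∫ x, F x z := by
        rw [integral_const_mul, integral_integral_swap hF]
end
end
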